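/- Let w₁, w₂, w₃ > 0 and let D ∈ M_4(ℝ) be the Dirac operator of the chain w₁−w₂−w₃, i.e. D_{i,i+1} = D_{i+1,i} = 1/w_i for i = 1,2,3 and all other entries 0. Then the noncommutative length λ(w₁−w₂−w₃) = d^D(1,4) equals sqrt(w₁²+w₂²)·sqrt(w₃²+w₂²)/w₂ if w₂ > sqrt(w₁w₃), and equals w₁ + w₃ if w₂ ≤ sqrt(w₁w₃). -/

import Mathlib

open scoped ENNReal

/-- The operator norm on square matrices induced by the Euclidean (ℓ²) norm. -/
noncomputable def opNorm {ι : Type*} [Finite ι] (M : Matrix ι ι ℂ) : ℝ :=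
  letI := Fintype.ofFinite ι
  letI := Classical.decEq ι
  ‖Matrix.toEuclideanCLM (𝕜 := ℂ) M‖

/-- The commutator `[D, π(a)]` of a matrix with the diagonal matrix of `a`. -/
noncomputable def commD {ι : Type*} [Finite ι] (D : Matrix ι ι ℂ) (a : ι → ℂ) : Matrix ι ι ℂ :=
  letI := Fintype.ofFinite ι
  letI := Classical.decEq ι
  D * Matrix.diagonal a - Matrix.diagonal a * D

/-- Connes' noncommutative distance associated to the Dirac operator `D`. -/
noncomputable def ncDist {ι : Type*} [Finite ι] (D : Matrix ι ι ℂ) (i j : ι) : ℝ≥0∞ :=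
  ⨆ (a : ι → ℂ) (_ : opNorm (commD D a) ≤ 1), ENNReal.ofReal ‖a i - a j‖

/-- The weight of an edge: the inverse of `|D i j|` (infinite if `D i j = 0`). -/
noncomputable def eWeight {ι : Type*} (D : Matrix ι ι ℂ) (u v : ι) : ℝ≥0∞ :=
  (ENNReal.ofReal ‖D u v‖)⁻¹

/-- Adjacency in the graph `G_D`. -/
def Adjac {ι : Type*} (D : Matrix ι ι ℂ) (u v : ι) : Prop := u ≠ v ∧ D u v ≠ 0

/-- The length of a walk `i :: p` computed with weights `eWeight D`. -/
noncomputable def walkLength {ι : Type*} (D : Matrix ι ι ℂ) : ι → List ι → ℝ≥0∞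
  | _, [] => 0
  | u, v :: rest => eWeight D u v + walkLength D v rest

/-- `i :: p` is a walk from `i` to `j` in the graph `G_D`. -/
def IsWalk {ι : Type*} (D : Matrix ι ι ℂ) (i j : ι) (p : List ι) : Prop :=
  List.Chain (Adjac D) i p ∧ (i :: p).getLast (List.cons_ne_nil _ _) = j

/-- `i` and `j` lie in the same connected component of `G_D`. -/
def Conn {ι : Type*} (D : Matrix ι ι ℂ) (i j : ι) : Prop := ∃ p, IsWalk D i j p

/-- The geodesic (weighted shortest-path) distance on `G_D`. -/
noncomputable def gDist {ι : Type*} (D : Matrix ι ι ℂ) (i j : ι) : ℝ≥0∞ :=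
  ⨅ (p : List ι) (_ : IsWalk D i j p), walkLength D i p


/-!
Put `tₖ = |a(k+1) - a(k)| / wₖ`. Up to diagonal phases, `[D, π(a)]` is the tridiagonal matrix with
entries `±tₖ`, which splits into two `2 × 2` blocks acting on the even and on the odd coordinates;
both blocks are contractions exactly when `t₁, t₃ ≤ 1` and `t₂² ≤ (1 - t₁²)(1 - t₃²)`. Since
`|a(1) - a(4)| ≤ w₁ t₁ + w₂ t₂ + w₃ t₃`, with equality for real increasing `a`, the length is the
maximum of this linear form over that region. Bounding `2 w₂ t₂` by AM-GM against the two factors of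
the middle constraint gives the maximum: `w₁ + w₃`, attained at `t = (1, 0, 1)`, when
`w₂² ≤ w₁ w₃`, and otherwise `√(w₁² + w₂²) √(w₃² + w₂²) / w₂`, attained where the middle constraint
is an equality.
-/

open Matrix

def IsChainContraction (t₁ t₂ t₃ : ℝ) : Prop :=
  t₁ ^ 2 ≤ 1 ∧ t₃ ^ 2 ≤ 1 ∧ t₂ ^ 2 ≤ (1 - t₁ ^ 2) * (1 - t₃ ^ 2)

lemma IsChainContraction.symm {t₁ t₂ t₃ : ℝ} (h : IsChainContraction t₁ t₂ t₃) :
    IsChainContraction t₃ t₂ t₁ :=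
  ⟨h.2.1, h.1, by linarith [h.2.2]⟩

lemma forall_sq_add_sq_le_iff_isChainContraction (t₁ t₂ t₃ : ℝ) :
    (∀ x y : ℝ, (t₁ * x + t₂ * y) ^ 2 + (t₃ * y) ^ 2 ≤ x ^ 2 + y ^ 2) ↔
      IsChainContraction t₁ t₂ t₃ := by
  constructor
  · intro h
    have h₁ : t₁ ^ 2 ≤ 1 := by nlinarith [h 1 0]
    have h₂₃ : t₂ ^ 2 + t₃ ^ 2 ≤ 1 := by nlinarith [h 0 1]
    have hdisc : discrim (1 - t₁ ^ 2) (-2 * t₁ * t₂) (1 - t₂ ^ 2 - t₃ ^ 2) ≤ 0 :=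
      discrim_le_zero fun x => by nlinarith [h x 1]
    refine ⟨h₁, by nlinarith [sq_nonneg t₂], ?_⟩
    rw [discrim] at hdisc
    nlinarith
  · rintro ⟨h₁, h₃, h₂⟩ x y
    have h₂₃ : t₂ ^ 2 ≤ 1 - t₃ ^ 2 := by nlinarith [sq_nonneg t₁]
    -- with `A = 1 - t₁²`, `B = -t₁ t₂`, `C = 1 - t₂² - t₃²`:
    -- `A (A x² + 2 B x y + C y²) = (A x + B y)² + (A C - B²) y²`
    have hform : 0 ≤ (1 - t₁ ^ 2) * ((1 - t₁ ^ 2) * x ^ 2 - 2 * t₁ * t₂ * x * y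
        + (1 - t₂ ^ 2 - t₃ ^ 2) * y ^ 2) := by
      nlinarith [sq_nonneg ((1 - t₁ ^ 2) * x - t₁ * t₂ * y), sq_nonneg y]
    rcases (sub_nonneg.2 h₁).lt_or_eq with hpos | hzero
    · nlinarith [(mul_nonneg_iff_of_pos_left hpos).1 hform]
    · have ht₂ : t₂ = 0 := by nlinarith [sq_nonneg t₂]
      subst ht₂
      nlinarith [sq_nonneg y]

lemma opNorm_le_one_iff {ι : Type*} [Fintype ι] [DecidableEq ι] (M : Matrix ι ι ℂ) :
    opNorm M ≤ 1 ↔ ∀ v : ι → ℂ, ∑ i, ‖(M *ᵥ v) i‖ ^ 2 ≤ ∑ i, ‖v i‖ ^ 2 := by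
  have hM : opNorm M = ‖Matrix.toEuclideanCLM (𝕜 := ℂ) M‖ := by
    unfold opNorm
    congr!
  rw [hM, ContinuousLinearMap.opNorm_le_iff zero_le_one]
  refine ⟨fun h v => ?_, fun h x => ?_⟩
  · have hv := h (WithLp.toLp 2 v)
    rw [one_mul, Matrix.toEuclideanCLM_toLp] at hv
    have := pow_le_pow_left₀ (norm_nonneg _) hv 2
    rwa [EuclideanSpace.norm_sq_eq, EuclideanSpace.norm_sq_eq] at this
  · rw [one_mul, ← WithLp.toLp_ofLp (p := 2) x, Matrix.toEuclideanCLM_toLp]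
    refine pow_le_pow_iff_left₀ (norm_nonneg _) (norm_nonneg _) two_ne_zero |>.1 ?_
    rw [EuclideanSpace.norm_sq_eq, EuclideanSpace.norm_sq_eq]
    exact h x.ofLp

def chainCommutator (c₁ c₂ c₃ : ℂ) : Matrix (Fin 4) (Fin 4) ℂ :=
  !![0, c₁, 0, 0;
     -c₁, 0, c₂, 0;
     0, -c₂, 0, c₃;
     0, 0, -c₃, 0]

lemma sum_norm_sq_chainCommutator_mulVec (c₁ c₂ c₃ : ℂ) (v : Fin 4 → ℂ) :
    ∑ i, ‖(chainCommutator c₁ c₂ c₃ *ᵥ v) i‖ ^ 2 =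
      ‖c₁ * v 1‖ ^ 2 + ‖c₂ * v 2 - c₁ * v 0‖ ^ 2 + ‖c₃ * v 3 - c₂ * v 1‖ ^ 2
        + ‖c₃ * v 2‖ ^ 2 := by
  simp only [Fin.sum_univ_four, chainCommutator, Matrix.mulVec, dotProduct]
  simp [neg_mul, ← sub_eq_neg_add]

lemma opNorm_chainCommutator_le_one_iff (c₁ c₂ c₃ : ℂ) :
    opNorm (chainCommutator c₁ c₂ c₃) ≤ 1 ↔ IsChainContraction ‖c₁‖ ‖c₂‖ ‖c₃‖ := by
  rw [opNorm_le_one_iff]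
  simp_rw [sum_norm_sq_chainCommutator_mulVec, Fin.sum_univ_four]
  constructor
  · intro h
    rw [← forall_sq_add_sq_le_iff_isChainContraction]
    intro x y
    -- rotate the test vector so that `c₁ v₀` and `c₂ v₂` point in opposite directions
    obtain ⟨u₁, hu₁, hc₁⟩ := RCLike.exists_norm_eq_mul_self c₁
    obtain ⟨u₂, hu₂, hc₂⟩ := RCLike.exists_norm_eq_mul_self c₂
    have hv := h ![x * u₁, 0, -(y * u₂), 0]
    have hmid : -(c₂ * (y * u₂)) - c₁ * (x * u₁) = -((‖c₁‖ * x + ‖c₂‖ * y : ℝ) : ℂ) := by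
      push_cast
      linear_combination x * hc₁ + y * hc₂
    simp only [cons_val_zero, cons_val_one, cons_val, mul_zero, norm_zero, ne_eq,
      OfNat.ofNat_ne_zero, not_false_eq_true, zero_pow, mul_neg, zero_add, sub_self, add_zero,
      norm_neg, Complex.norm_mul, Complex.norm_real, Real.norm_eq_abs, hu₁, hu₂, mul_one,
      sq_abs] at hv
    rw [hmid, norm_neg, Complex.norm_real, Real.norm_eq_abs, sq_abs] at hv
    simpa only [mul_pow, sq_abs] using hv
  · intro h v
    have hA := (forall_sq_add_sq_le_iff_isChainContraction _ _ _).2 h ‖v 0‖ ‖v 2‖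
    have hB := (forall_sq_add_sq_le_iff_isChainContraction _ _ _).2 h.symm ‖v 3‖ ‖v 1‖
    have hmid₁ : ‖c₂ * v 2 - c₁ * v 0‖ ≤ ‖c₁‖ * ‖v 0‖ + ‖c₂‖ * ‖v 2‖ := by
      simpa only [norm_mul, add_comm] using norm_sub_le (c₂ * v 2) (c₁ * v 0)
    have hmid₂ : ‖c₃ * v 3 - c₂ * v 1‖ ≤ ‖c₃‖ * ‖v 3‖ + ‖c₂‖ * ‖v 1‖ := by
      simpa only [norm_mul] using norm_sub_le (c₃ * v 3) (c₂ * v 1)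
    have hsq₁ := pow_le_pow_left₀ (norm_nonneg _) hmid₁ 2
    have hsq₂ := pow_le_pow_left₀ (norm_nonneg _) hmid₂ 2
    simp only [norm_mul, mul_pow] at hA hB hsq₁ hsq₂ ⊢
    nlinarith

lemma commD_apply {ι : Type*} [Fintype ι] [DecidableEq ι] (D : Matrix ι ι ℂ) (a : ι → ℂ)
    (i j : ι) : commD D a i j = D i j * (a j - a i) := by
  have hD : commD D a = D * diagonal a - diagonal a * D := by
    unfold commD
    congr!
  rw [hD, Matrix.sub_apply, mul_diagonal, diagonal_mul]
  ring

noncomputable def chainDirac (w₁ w₂ w₃ : ℝ) : Matrix (Fin 4) (Fin 4) ℂ :=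
  !![0, ((w₁⁻¹ : ℝ) : ℂ), 0, 0;
     ((w₁⁻¹ : ℝ) : ℂ), 0, ((w₂⁻¹ : ℝ) : ℂ), 0;
     0, ((w₂⁻¹ : ℝ) : ℂ), 0, ((w₃⁻¹ : ℝ) : ℂ);
     0, 0, ((w₃⁻¹ : ℝ) : ℂ), 0]

lemma commD_chainDirac (w₁ w₂ w₃ : ℝ) (a : Fin 4 → ℂ) :
    commD (chainDirac w₁ w₂ w₃) a =
      chainCommutator ((w₁⁻¹ : ℝ) * (a 1 - a 0)) ((w₂⁻¹ : ℝ) * (a 2 - a 1))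
        ((w₃⁻¹ : ℝ) * (a 3 - a 2)) := by
  ext i j
  fin_cases i <;> fin_cases j <;> simp [commD_apply, chainDirac, chainCommutator] <;> ring

lemma opNorm_commD_chainDirac_le_one_iff {w₁ w₂ w₃ : ℝ} (h₁ : 0 < w₁) (h₂ : 0 < w₂)
    (h₃ : 0 < w₃) (a : Fin 4 → ℂ) :
    opNorm (commD (chainDirac w₁ w₂ w₃) a) ≤ 1 ↔
      IsChainContraction (‖a 1 - a 0‖ / w₁) (‖a 2 - a 1‖ / w₂) (‖a 3 - a 2‖ / w₃) := by
  simp only [commD_chainDirac, opNorm_chainCommutator_le_one_iff, norm_mul, Complex.norm_real,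
    Real.norm_of_nonneg (inv_nonneg.2 h₁.le), Real.norm_of_nonneg (inv_nonneg.2 h₂.le),
    Real.norm_of_nonneg (inv_nonneg.2 h₃.le), inv_mul_eq_div]

def chainValues (w₁ w₂ w₃ : ℝ) : Set ℝ :=
  {s | ∃ t₁ t₂ t₃ : ℝ, 0 ≤ t₁ ∧ 0 ≤ t₂ ∧ 0 ≤ t₃ ∧ IsChainContraction t₁ t₂ t₃ ∧
    s = w₁ * t₁ + w₂ * t₂ + w₃ * t₃}

lemma ncDist_chainDirac_eq_of_isGreatest {w₁ w₂ w₃ M : ℝ} (h₁ : 0 < w₁) (h₂ : 0 < w₂)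
    (h₃ : 0 < w₃) (hM : IsGreatest (chainValues w₁ w₂ w₃) M) :
    ncDist (chainDirac w₁ w₂ w₃) 0 3 = ENNReal.ofReal M := by
  obtain ⟨⟨t₁, t₂, t₃, ht₁, ht₂, ht₃, ht, rfl⟩, hub⟩ := hM
  unfold ncDist
  apply le_antisymm
  · refine iSup₂_le fun a ha => ENNReal.ofReal_le_ofReal ?_
    rw [opNorm_commD_chainDirac_le_one_iff h₁ h₂ h₃] at ha
    calc ‖a 0 - a 3‖ ≤ ‖a 1 - a 0‖ + ‖a 2 - a 1‖ + ‖a 3 - a 2‖ := by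
          rw [← norm_neg]
          convert norm_add₃_le using 2
          ring
      _ = w₁ * (‖a 1 - a 0‖ / w₁) + w₂ * (‖a 2 - a 1‖ / w₂) + w₃ * (‖a 3 - a 2‖ / w₃) := by
          field_simp
      _ ≤ _ := hub ⟨_, _, _, by positivity, by positivity, by positivity, ha, rfl⟩
  · let a : Fin 4 → ℂ :=
      ![0, (w₁ * t₁ : ℝ), (w₁ * t₁ + w₂ * t₂ : ℝ), (w₁ * t₁ + w₂ * t₂ + w₃ * t₃ : ℝ)]
    have ha : opNorm (commD (chainDirac w₁ w₂ w₃) a) ≤ 1 := by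
      rw [opNorm_commD_chainDirac_le_one_iff h₁ h₂ h₃]
      convert ht using 1 <;>
        simp [a, abs_of_pos, abs_of_nonneg, h₁.ne', h₂.ne', h₃.ne', h₁, h₂, h₃, ht₁, ht₂, ht₃]
    have h03 : ‖a 0 - a 3‖ = w₁ * t₁ + w₂ * t₂ + w₃ * t₃ := by
      simp only [a, cons_val_zero, cons_val, zero_sub, norm_neg, Complex.norm_real]
      exact Real.norm_of_nonneg (by positivity)
    exact le_iSup₂_of_le a ha (by rw [h03])

namespace IsChainContraction

variable {t₁ t₂ t₃ : ℝ}

lemma two_mul_le (ht : IsChainContraction t₁ t₂ t₃) (p q : ℝ) :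
    2 * (p * q * t₂) ≤ p ^ 2 * (1 - t₁ ^ 2) + q ^ 2 * (1 - t₃ ^ 2) := by
  obtain ⟨h₁, h₃, h₂⟩ := ht
  refine two_mul_le_add_of_sq_le_mul (by nlinarith) (by nlinarith) ?_
  calc (p * q * t₂) ^ 2 = (p * q) ^ 2 * t₂ ^ 2 := by ring
    _ ≤ (p * q) ^ 2 * ((1 - t₁ ^ 2) * (1 - t₃ ^ 2)) := by gcongr
    _ = _ := by ring

lemma add_le_sqrt_mul_sqrt_div (ht : IsChainContraction t₁ t₂ t₃) {w₁ w₂ w₃ : ℝ}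
    (h₂ : 0 < w₂) :
    w₁ * t₁ + w₂ * t₂ + w₃ * t₃ ≤ √(w₁ ^ 2 + w₂ ^ 2) * √(w₃ ^ 2 + w₂ ^ 2) / w₂ := by
  set P := √(w₁ ^ 2 + w₂ ^ 2)
  set Q := √(w₃ ^ 2 + w₂ ^ 2)
  have hP : P ^ 2 = w₁ ^ 2 + w₂ ^ 2 := Real.sq_sqrt (by positivity)
  have hQ : Q ^ 2 = w₃ ^ 2 + w₂ ^ 2 := Real.sq_sqrt (by positivity)
  have hPQ : 0 < P * Q := by positivity
  have hmid := ht.two_mul_le P Q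
  rw [le_div_iff₀ h₂]
  refine le_of_mul_le_mul_left ?_ (mul_pos two_pos hPQ)
  -- complete the squares in `t₁` and in `t₃`
  nlinarith [sq_nonneg (w₂ * P * t₁ - w₁ * Q), sq_nonneg (w₂ * Q * t₃ - w₃ * P),
    mul_le_mul_of_nonneg_left hmid (sq_nonneg w₂)]

lemma add_le_add_of_sq_le_mul (ht : IsChainContraction t₁ t₂ t₃) {w₁ w₂ w₃ : ℝ}
    (h₁ : 0 ≤ w₁) (h₃ : 0 ≤ w₃) (hw : w₂ ^ 2 ≤ w₁ * w₃) :
    w₁ * t₁ + w₂ * t₂ + w₃ * t₃ ≤ w₁ + w₃ := by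
  obtain ⟨ht₁, ht₃, ht₂⟩ := ht
  have hmid : 2 * (w₂ * t₂) ≤ w₁ * (1 - t₁ ^ 2) + w₃ * (1 - t₃ ^ 2) := by
    refine two_mul_le_add_of_sq_le_mul (by nlinarith) (by nlinarith) ?_
    calc (w₂ * t₂) ^ 2 = w₂ ^ 2 * t₂ ^ 2 := by ring
      _ ≤ (w₁ * w₃) * ((1 - t₁ ^ 2) * (1 - t₃ ^ 2)) :=
        mul_le_mul hw ht₂ (sq_nonneg _) (mul_nonneg h₁ h₃)
      _ = _ := by ring
  nlinarith [mul_nonneg h₁ (sq_nonneg (1 - t₁)), mul_nonneg h₃ (sq_nonneg (1 - t₃))]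

end IsChainContraction

lemma isGreatest_chainValues_of_sq_le {w₁ w₂ w₃ : ℝ} (h₁ : 0 ≤ w₁) (h₃ : 0 ≤ w₃)
    (hw : w₂ ^ 2 ≤ w₁ * w₃) : IsGreatest (chainValues w₁ w₂ w₃) (w₁ + w₃) := by
  refine ⟨⟨1, 0, 1, zero_le_one, le_rfl, zero_le_one, by norm_num [IsChainContraction], by ring⟩,
    ?_⟩
  rintro _ ⟨t₁, t₂, t₃, -, -, -, ht, rfl⟩
  exact ht.add_le_add_of_sq_le_mul h₁ h₃ hw

lemma isGreatest_chainValues_of_mul_le_sq {w₁ w₂ w₃ : ℝ} (h₁ : 0 ≤ w₁) (h₂ : 0 < w₂)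
    (h₃ : 0 ≤ w₃) (hw : w₁ * w₃ ≤ w₂ ^ 2) :
    IsGreatest (chainValues w₁ w₂ w₃) (√(w₁ ^ 2 + w₂ ^ 2) * √(w₃ ^ 2 + w₂ ^ 2) / w₂) := by
  refine ⟨?_, fun _ ⟨_, _, _, _, _, _, ht, hs⟩ => hs ▸ ht.add_le_sqrt_mul_sqrt_div h₂⟩
  set P := √(w₁ ^ 2 + w₂ ^ 2)
  set Q := √(w₃ ^ 2 + w₂ ^ 2)
  have hP : P ^ 2 = w₁ ^ 2 + w₂ ^ 2 := Real.sq_sqrt (by positivity)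
  have hQ : Q ^ 2 = w₃ ^ 2 + w₂ ^ 2 := Real.sq_sqrt (by positivity)
  have hP₀ : 0 < P := Real.sqrt_pos.2 (by positivity)
  have hQ₀ : 0 < Q := Real.sqrt_pos.2 (by positivity)
  set δ := w₂ ^ 4 - w₁ ^ 2 * w₃ ^ 2
  have hδ : 0 ≤ δ := by nlinarith [mul_nonneg h₁ h₃]
  have e₁ : 1 - (w₁ * Q / (w₂ * P)) ^ 2 = δ / (w₂ ^ 2 * P ^ 2) := by
    field_simp
    linear_combination (-w₁ ^ 2) * hQ + w₂ ^ 2 * hP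
  have e₃ : 1 - (w₃ * P / (w₂ * Q)) ^ 2 = δ / (w₂ ^ 2 * Q ^ 2) := by
    field_simp
    linear_combination (-w₃ ^ 2) * hP + w₂ ^ 2 * hQ
  refine ⟨w₁ * Q / (w₂ * P), δ / (w₂ ^ 2 * P * Q), w₃ * P / (w₂ * Q), by positivity,
    by positivity, by positivity, ⟨?_, ?_, ?_⟩, ?_⟩
  · nlinarith [e₁, show 0 ≤ δ / (w₂ ^ 2 * P ^ 2) by positivity]
  · nlinarith [e₃, show 0 ≤ δ / (w₂ ^ 2 * Q ^ 2) by positivity]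
  · rw [e₁, e₃]
    exact le_of_eq (by field_simp)
  · field_simp
    linear_combination (P ^ 2 - w₁ ^ 2) * hQ + w₂ ^ 2 * hP

theorem stmt11 (w₁ w₂ w₃ : ℝ) (h1 : 0 < w₁) (h2 : 0 < w₂) (h3 : 0 < w₃) :
    (w₂ > Real.sqrt (w₁ * w₃) →
      ncDist !![0, ((w₁⁻¹ : ℝ) : ℂ), 0, 0;
                ((w₁⁻¹ : ℝ) : ℂ), 0, ((w₂⁻¹ : ℝ) : ℂ), 0;
                0, ((w₂⁻¹ : ℝ) : ℂ), 0, ((w₃⁻¹ : ℝ) : ℂ);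
                0, 0, ((w₃⁻¹ : ℝ) : ℂ), 0] 0 3 =
        ENNReal.ofReal (Real.sqrt (w₁ ^ 2 + w₂ ^ 2) * Real.sqrt (w₃ ^ 2 + w₂ ^ 2) / w₂)) ∧
    (w₂ ≤ Real.sqrt (w₁ * w₃) →
      ncDist !![0, ((w₁⁻¹ : ℝ) : ℂ), 0, 0;
                ((w₁⁻¹ : ℝ) : ℂ), 0, ((w₂⁻¹ : ℝ) : ℂ), 0;
                0, ((w₂⁻¹ : ℝ) : ℂ), 0, ((w₃⁻¹ : ℝ) : ℂ);
                0, 0, ((w₃⁻¹ : ℝ) : ℂ), 0] 0 3 =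
        ENNReal.ofReal (w₁ + w₃)) := by
  refine ⟨fun hgt => ?_, fun hle => ?_⟩
  · exact ncDist_chainDirac_eq_of_isGreatest h1 h2 h3
      (isGreatest_chainValues_of_mul_le_sq h1.le h2 h3.le ((Real.sqrt_lt' h2).1 hgt).le)
  · exact ncDist_chainDirac_eq_of_isGreatest h1 h2 h3
      (isGreatest_chainValues_of_sq_le h1.le h3.le ((Real.le_sqrt h2.le (by positivity)).1 hle))
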